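/- Let θ ∈ [0,1] and λ ∈ ℝ, and let α > √(max(1/2 − θ, 0)) · |λ|. Then there exists a constant C > 0 (depending on θ, λ, α) such that for all δT ∈ (0,1], with η := (1 + i(1−θ)λδT)/(1 − iθλδT), one has ( |e^{iλδT} − η| e^{-αδT} ) / ( 1 − |η| e^{-αδT} ) ≤ C ( |2θ − 1| δT + δT² ). In particular, the k-th power of the left-hand side is of order δT^k for θ ≠ 1/2 and of order δT^{2k} for θ = 1/2. -/

import Mathlib

/-! Put `x = λ δT` and `η = (1 + i(1-θ)x)/(1 - iθx)`. Then
`|η|² = (1 + (1-θ)²x²)/(1 + θ²x²) ≤ 1 + max(1-2θ, 0) x²`, which the hypothesis on `α` bounds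
by `1 + 2α²δT²`; comparing with `exp (2αδT) ≥ 1 + 2αδT + 2α²δT²` shows that the denominator is
at least `c δT` with `c = α/(1 + 2α + 2α²)`. For the numerator, `1 + i(1-θ)x` agrees with
`(1 + ix - x²/2)(1 - iθx)` up to `(θ - 1/2)x² + O(x³)`, so
`|e^{ix} - η| ≤ |2θ-1| x²/2 + 3|x|³` (trivially so when `|x| > 1`). -/

open Complex

noncomputable def thetaAmplification (θ x : ℝ) : ℂ :=
  (1 + I * ((1 - θ) * x)) / (1 - I * (θ * x))

lemma norm_one_add_I_mul_sq (r : ℝ) : ‖1 + I * r‖ ^ 2 = 1 + r ^ 2 := by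
  rw [show (1 : ℂ) + I * r = (1 : ℝ) + r * I by push_cast; ring, norm_add_mul_I,
    Real.sq_sqrt (by positivity), one_pow]

lemma norm_one_sub_I_mul_sq (r : ℝ) : ‖1 - I * r‖ ^ 2 = 1 + r ^ 2 := by
  simpa [sub_eq_add_neg] using norm_one_add_I_mul_sq (-r)

lemma one_le_norm_one_sub_I_mul (r : ℝ) : 1 ≤ ‖1 - I * r‖ := by
  have := norm_one_sub_I_mul_sq r
  nlinarith [norm_nonneg (1 - I * r), sq_nonneg r]

lemma norm_thetaAmplification_sq (θ x : ℝ) :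
    ‖thetaAmplification θ x‖ ^ 2 = (1 + ((1 - θ) * x) ^ 2) / (1 + (θ * x) ^ 2) := by
  have hp := norm_one_add_I_mul_sq ((1 - θ) * x)
  have hq := norm_one_sub_I_mul_sq (θ * x)
  push_cast at hp hq
  rw [thetaAmplification, norm_div, div_pow, hp, hq]

lemma norm_thetaAmplification_sq_le (θ x : ℝ) :
    ‖thetaAmplification θ x‖ ^ 2 ≤ 1 + max (1 - 2 * θ) 0 * x ^ 2 := by
  rw [norm_thetaAmplification_sq, div_le_iff₀ (by positivity)]
  nlinarith [le_max_left (1 - 2 * θ) 0, le_max_right (1 - 2 * θ) 0, sq_nonneg x,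
    mul_nonneg (mul_nonneg (le_max_right (1 - 2 * θ) 0) (sq_nonneg x)) (sq_nonneg (θ * x))]

lemma norm_thetaAmplification_le {θ : ℝ} (hθ : θ ∈ Set.Icc (0 : ℝ) 1) (x : ℝ) :
    ‖thetaAmplification θ x‖ ≤ 1 + |x| := by
  have h : ‖thetaAmplification θ x‖ ^ 2 ≤ (1 + |x|) ^ 2 := by
    rw [norm_thetaAmplification_sq, div_le_iff₀ (by positivity)]
    nlinarith [hθ.1, hθ.2, abs_nonneg x, sq_abs x, sq_nonneg (θ * x),
      mul_nonneg (sq_nonneg (1 + |x|)) (sq_nonneg (θ * x))]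
  exact (pow_le_pow_iff_left₀ (norm_nonneg _) (by positivity) two_ne_zero).1 h

lemma norm_exp_I_mul_sub_taylor_le {x : ℝ} (hx : |x| ≤ 1) :
    ‖exp (I * x) - (1 + I * x + (I * x) ^ 2 / 2)‖ ≤ |x| ^ 3 := by
  have hz : ‖I * x‖ = |x| := by simp
  have h := Complex.exp_bound (x := I * x) (hz ▸ hx) (n := 3) (by norm_num)
  simp only [Finset.sum_range_succ, Finset.sum_range_zero, hz] at h
  norm_num [Nat.factorial] at h
  nlinarith [pow_nonneg (abs_nonneg x) 3]

lemma norm_exp_I_mul_sub_thetaAmplification_le_of_abs_le_one {θ : ℝ}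
    (hθ : θ ∈ Set.Icc (0 : ℝ) 1) {x : ℝ} (hx : |x| ≤ 1) :
    ‖exp (I * x) - thetaAmplification θ x‖ ≤ |2 * θ - 1| / 2 * x ^ 2 + 3 * |x| ^ 3 := by
  set q : ℂ := 1 - I * (θ * x)
  set T : ℂ := 1 + I * x + (I * x) ^ 2 / 2
  have hq1 : 1 ≤ ‖q‖ := by simpa using one_le_norm_one_sub_I_mul (θ * x)
  have hq2 : ‖q‖ ≤ 2 := by
    have : ‖q‖ ^ 2 = 1 + (θ * x) ^ 2 := by simpa using norm_one_sub_I_mul_sq (θ * x)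
    have : (θ * x) ^ 2 ≤ 1 := by
      rw [mul_pow]
      refine mul_le_one₀ (pow_le_one₀ hθ.1 hθ.2) (sq_nonneg x) ?_
      rw [← sq_abs]; exact pow_le_one₀ (abs_nonneg x) hx
    nlinarith [norm_nonneg q]
  have htaylor : T * q - (1 + I * ((1 - θ) * x)) =
      ((θ - 1 / 2) * x ^ 2 : ℝ) + I * (θ * x ^ 3 / 2 : ℝ) := by
    simp only [T, q]; push_cast
    linear_combination ((x : ℂ) ^ 2 / 2 - θ * x ^ 2 - I * θ * x ^ 3 / 2) * I_sq
  have htaylor_le :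
      ‖T * q - (1 + I * ((1 - θ) * x))‖ ≤ |2 * θ - 1| / 2 * x ^ 2 + |x| ^ 3 / 2 := by
    rw [htaylor]
    refine (norm_add_le _ _).trans ?_
    simp only [norm_mul, norm_I, norm_real, Real.norm_eq_abs, one_mul, abs_div, abs_pow, sq_abs,
      abs_mul, abs_of_nonneg hθ.1]
    rw [show θ - 1 / 2 = (2 * θ - 1) / 2 by ring, abs_div, abs_two]
    gcongr
    exact mul_le_of_le_one_left (by positivity) hθ.2
  calc ‖exp (I * x) - thetaAmplification θ x‖
      = ‖(exp (I * x) - T) * q + (T * q - (1 + I * ((1 - θ) * x)))‖ / ‖q‖ := by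
        rw [← norm_div]; congr 1
        have : q ≠ 0 := norm_pos_iff.1 (one_pos.trans_le hq1)
        rw [eq_div_iff this, thetaAmplification, sub_mul, div_mul_cancel₀ _ this]; ring
    _ ≤ ‖(exp (I * x) - T) * q + (T * q - (1 + I * ((1 - θ) * x)))‖ :=
        div_le_self (norm_nonneg _) hq1
    _ ≤ |x| ^ 3 * 2 + (|2 * θ - 1| / 2 * x ^ 2 + |x| ^ 3 / 2) := by
        refine (norm_add_le _ _).trans (add_le_add ?_ htaylor_le)
        rw [norm_mul]
        exact mul_le_mul (norm_exp_I_mul_sub_taylor_le hx) hq2 (norm_nonneg _) (by positivity)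
    _ ≤ _ := by nlinarith [pow_nonneg (abs_nonneg x) 3]

lemma norm_exp_I_mul_sub_thetaAmplification_le {θ : ℝ} (hθ : θ ∈ Set.Icc (0 : ℝ) 1) (x : ℝ) :
    ‖exp (I * x) - thetaAmplification θ x‖ ≤ |2 * θ - 1| / 2 * x ^ 2 + 3 * |x| ^ 3 := by
  rcases le_or_gt |x| 1 with hx | hx
  · exact norm_exp_I_mul_sub_thetaAmplification_le_of_abs_le_one hθ hx
  calc ‖exp (I * x) - thetaAmplification θ x‖
      ≤ ‖exp (I * x)‖ + ‖thetaAmplification θ x‖ := norm_sub_le _ _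
    _ ≤ 1 + (1 + |x|) := by
        rw [norm_exp_I_mul_ofReal]; gcongr; exact norm_thetaAmplification_le hθ x
    _ ≤ _ := by nlinarith [mul_nonneg (abs_nonneg (2 * θ - 1)) (sq_nonneg x), sq_nonneg |x|]

lemma mul_exp_neg_le_one_sub {α t e : ℝ} (hα : 0 < α) (ht : 0 < t) (ht1 : t ≤ 1) (he : 0 ≤ e)
    (he2 : e ^ 2 ≤ 1 + 2 * α ^ 2 * t ^ 2) :
    e * Real.exp (-α * t) ≤ 1 - α / (1 + 2 * α + 2 * α ^ 2) * t := by
  set c := α / (1 + 2 * α + 2 * α ^ 2)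
  have hc : c * (1 + 2 * α + 2 * α ^ 2) = α := div_mul_cancel₀ _ (by positivity)
  have hc0 : 0 < c := by positivity
  have hct : c * t ≤ 1 := by nlinarith
  have hexp : 1 + 2 * α * t + 2 * α ^ 2 * t ^ 2 ≤ Real.exp (2 * α * t) := by
    nlinarith [Real.quadratic_le_exp_of_nonneg (x := 2 * α * t) (by positivity)]
  -- `c` is chosen so that `2c(1 + 2α + 2α²) = 2α` absorbs the linear term of `exp (2αt)`
  have key : e ^ 2 ≤ ((1 - c * t) * Real.exp (α * t)) ^ 2 :=
    calc e ^ 2 ≤ 1 + 2 * α ^ 2 * t ^ 2 := he2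
      _ ≤ (1 - 2 * c * t) * (1 + 2 * α * t + 2 * α ^ 2 * t ^ 2) := by
          nlinarith [mul_nonneg (mul_nonneg hc0.le hα.le) (mul_nonneg ht.le (sub_nonneg.2 ht1)),
            mul_nonneg (mul_nonneg hc0.le (sq_nonneg α)) (mul_nonneg ht.le (sub_nonneg.2 ht1)),
            mul_nonneg (mul_nonneg hc0.le (sq_nonneg α))
              (mul_nonneg (mul_nonneg ht.le ht.le) (sub_nonneg.2 ht1))]
      _ ≤ (1 - c * t) ^ 2 * Real.exp (2 * α * t) :=
          mul_le_mul (by nlinarith [sq_nonneg (c * t)]) hexp (by positivity) (by positivity)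
      _ = ((1 - c * t) * Real.exp (α * t)) ^ 2 := by
          rw [mul_pow, ← Real.exp_nat_mul]; ring_nf
  have hle : e ≤ (1 - c * t) * Real.exp (α * t) :=
    (pow_le_pow_iff_left₀ he (by nlinarith [Real.exp_pos (α * t)]) two_ne_zero).1 key
  calc e * Real.exp (-α * t) ≤ (1 - c * t) * Real.exp (α * t) * Real.exp (-α * t) := by gcongr
    _ = 1 - c * t := by rw [mul_assoc, ← Real.exp_add]; simp

lemma max_one_sub_two_mul_mul_sq_lt {θ lam α : ℝ}
    (hα : Real.sqrt (max (1 / 2 - θ) 0) * |lam| < α) :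
    max (1 - 2 * θ) 0 * lam ^ 2 < 2 * α ^ 2 := by
  have h := pow_lt_pow_left₀ hα (by positivity) two_ne_zero
  rw [mul_pow, Real.sq_sqrt (le_max_right _ _), sq_abs] at h
  have h2 : max (1 - 2 * θ) 0 = 2 * max (1 / 2 - θ) 0 := by
    rw [mul_max_of_nonneg _ _ zero_le_two]; ring_nf
  rw [h2]; linarith

lemma mul_le_one_sub_norm_thetaAmplification_mul_exp {θ lam α t : ℝ} (hα : 0 < α)
    (hB : max (1 - 2 * θ) 0 * lam ^ 2 ≤ 2 * α ^ 2) (ht : 0 < t) (ht1 : t ≤ 1) :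
    α / (1 + 2 * α + 2 * α ^ 2) * t ≤
      1 - ‖thetaAmplification θ (lam * t)‖ * Real.exp (-α * t) := by
  have he2 : ‖thetaAmplification θ (lam * t)‖ ^ 2 ≤ 1 + 2 * α ^ 2 * t ^ 2 :=
    (norm_thetaAmplification_sq_le θ (lam * t)).trans (by rw [mul_pow]; nlinarith [sq_nonneg t])
  linarith [mul_exp_neg_le_one_sub hα ht ht1 (norm_nonneg _) he2]

/-- Bound on the per-iteration contraction factor of the parareal exponential
θ-scheme: |e^{iλδT} − η| e^{-αδT}/(1 − |η| e^{-αδT}) ≤ C(|2θ−1| δT + δT²). -/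
theorem stmt_4 (θ lam α : ℝ) (hθ : θ ∈ Set.Icc (0:ℝ) 1)
    (hα : Real.sqrt (max (1/2 - θ) 0) * |lam| < α) :
    ∃ C > 0, ∀ δT : ℝ, 0 < δT → δT ≤ 1 →
      ‖Complex.exp (Complex.I * (lam * δT)) -
          (1 + Complex.I * ((1 - θ) * lam * δT)) / (1 - Complex.I * (θ * lam * δT))‖
        * Real.exp (-α * δT)
        / (1 - ‖(1 + Complex.I * ((1 - θ) * lam * δT)) /
            (1 - Complex.I * (θ * lam * δT))‖ * Real.exp (-α * δT))
      ≤ C * (|2*θ - 1| * δT + δT^2) := by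
  have hα0 : 0 < α := (by positivity : 0 ≤ Real.sqrt (max (1 / 2 - θ) 0) * |lam|).trans_lt hα
  have hB := max_one_sub_two_mul_mul_sq_lt hα
  set c := α / (1 + 2 * α + 2 * α ^ 2)
  set K := lam ^ 2 + 3 * |lam| ^ 3 + 1
  have hc : 0 < c := by positivity
  refine ⟨K / c, by positivity, fun t ht ht1 => ?_⟩
  have hη : (1 + I * ((1 - θ) * lam * t)) / (1 - I * (θ * lam * t)) =
      thetaAmplification θ (lam * t) := by
    rw [thetaAmplification]; push_cast; ring_nf
  have hz : I * (lam * t) = I * ((lam * t : ℝ) : ℂ) := by push_cast; rfl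
  rw [hη, hz]
  have hden := mul_le_one_sub_norm_thetaAmplification_mul_exp hα0 hB.le ht ht1
  have hnum := norm_exp_I_mul_sub_thetaAmplification_le hθ (lam * t)
  rw [abs_mul, abs_of_pos ht] at hnum
  calc _ ≤ ‖exp (I * (lam * t : ℝ)) - thetaAmplification θ (lam * t)‖ / (c * t) :=
        div_le_div₀ (norm_nonneg _)
          (mul_le_of_le_one_right (norm_nonneg _) (Real.exp_le_one_iff.2 (by nlinarith)))
          (by positivity) hden
    _ ≤ (|2 * θ - 1| / 2 * (lam * t) ^ 2 + 3 * (|lam| * t) ^ 3) / (c * t) := by gcongr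
    _ ≤ K / c * (|2 * θ - 1| * t + t ^ 2) := by
        rw [div_le_iff₀ (by positivity), show K / c * (|2 * θ - 1| * t + t ^ 2) * (c * t)
          = K * (|2 * θ - 1| * t ^ 2 + t ^ 3) by field_simp]
        have hat : 0 ≤ |2 * θ - 1| * t ^ 2 := by positivity
        nlinarith [mul_nonneg hat (by positivity : 0 ≤ lam ^ 2 / 2 + 3 * |lam| ^ 3 + 1),
          mul_nonneg (pow_pos ht 3).le (by positivity : 0 ≤ lam ^ 2 + 1)]
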